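/- In SPC extended with the unary operator ⌊·⌋ with the patience rule pat and the non-straight rule cur (for fixed distinct visible actions a, b, c ∈ Δ), weak bisimilarity fails to be a congruence for ⌊·⌋: a.0 + b.0 + τ.b.0 ≈ a.0 + τ.b.0, but ⌊a.0 + b.0 + τ.b.0⌋ ≉ ⌊a.0 + τ.b.0⌋. -/

import Mathlib

/-- Labels `Δτ = Δ ∪ Δ̄ ∪ {τ}`: actions, coactions and the internal action `τ`. -/
inductive Lab (Δ : Type) : Type
  | act : Δ → Lab Δ
  | coact : Δ → Lab Δ
  | tau : Lab Δ

/-- Processes of SPC extended with the unary operator `⌊·⌋`: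
`p ::= 0 | δ.p | p ∥ q | p + q | ⌊p⌋`. -/
inductive FProc (Δ : Type) : Type
  | nil : FProc Δ
  | pre : Lab Δ → FProc Δ → FProc Δ
  | par : FProc Δ → FProc Δ → FProc Δ
  | choice : FProc Δ → FProc Δ → FProc Δ
  | floor : FProc Δ → FProc Δ

/-- `p ⇒ q`: the reflexive–transitive closure of `→τ`, for an arbitrary
labelled transition relation `step`. -/
def TauStar {Δ P : Type} (step : P → Lab Δ → P → Prop) : P → P → Prop :=
  Relation.ReflTransGen (fun p q => step p Lab.tau q)

/-- The weak transition relation `p ⇒δ q`: for `δ = τ` it is `p ⇒ q`,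
otherwise `p ⇒ p' →δ q' ⇒ q`. -/
def WStep {Δ P : Type} (step : P → Lab Δ → P → Prop) (p : P) (δ : Lab Δ) (q : P) : Prop :=
  (δ = Lab.tau ∧ TauStar step p q) ∨
  (δ ≠ Lab.tau ∧ ∃ p' q', TauStar step p p' ∧ step p' δ q' ∧ TauStar step q' q)

/-- A relation `R` is a weak bisimulation if every step from one side is matched
by a weak step from the other side, ending in `R`-related states. -/
def IsWeakBisim {Δ P : Type} (step : P → Lab Δ → P → Prop) (R : P → P → Prop) : Prop :=
  ∀ p q, R p q →
    (∀ δ p', step p δ p' → ∃ q', WStep step q δ q' ∧ R p' q') ∧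
    (∀ δ q', step q δ q' → ∃ p', WStep step p δ p' ∧ R p' q')

/-- Weak bisimilarity `p ≈ q`: `p` and `q` are related by some weak bisimulation. -/
def WBisim {Δ P : Type} (step : P → Lab Δ → P → Prop) (p q : P) : Prop :=
  ∃ R, IsWeakBisim step R ∧ R p q

/-- The LTS of SPC extended with `⌊·⌋` subject to the patience rule
(pat): `p →τ p'` implies `⌊p⌋ →τ ⌊p'⌋`, and the non-straight rule
(cur): `p →a q` and `p →b w` imply `⌊p⌋ →c ⌊q⌋`,
for fixed visible actions `a`, `b`, `c`. -/
inductive FStep {Δ : Type} (a b c : Δ) : FProc Δ → Lab Δ → FProc Δ → Prop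
  | pre (δ : Lab Δ) (p : FProc Δ) : FStep a b c (.pre δ p) δ p
  | choiceL {p p' q : FProc Δ} {δ : Lab Δ} :
      FStep a b c p δ p' → FStep a b c (.choice p q) δ p'
  | choiceR {p q q' : FProc Δ} {δ : Lab Δ} :
      FStep a b c q δ q' → FStep a b c (.choice p q) δ q'
  | parL {p p' q : FProc Δ} {δ : Lab Δ} :
      FStep a b c p δ p' → FStep a b c (.par p q) δ (.par p' q)
  | parR {p q q' : FProc Δ} {δ : Lab Δ} :
      FStep a b c q δ q' → FStep a b c (.par p q) δ (.par p q')
  | syn {p p' q q' : FProc Δ} {d : Δ} :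
      FStep a b c p (.act d) p' → FStep a b c q (.coact d) q' →
      FStep a b c (.par p q) .tau (.par p' q')
  | pat {p p' : FProc Δ} : FStep a b c p .tau p' → FStep a b c (.floor p) .tau (.floor p')
  | cur {p q w : FProc Δ} :
      FStep a b c p (.act a) q → FStep a b c p (.act b) w →
      FStep a b c (.floor p) (.act c) (.floor q)

/-!
The two sums have the same weak behaviour, since the direct `b`-summand of `a.0 + b.0 + τ.b.0`
is simulated by `τ.b.0`. Under `⌊·⌋` the rule cur sees only the strong initial actions:
`a.0 + b.0 + τ.b.0` offers both `a` and `b` at once, so its floor can do `c`, whereas no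
τ-derivative of `a.0 + τ.b.0` (itself and `b.0`) offers both, so its floor never can.
-/

section WeakBisimulation

variable {Δ P : Type} {step : P → Lab Δ → P → Prop}

theorem WStep.of_step {p q : P} {δ : Lab Δ} (h : step p δ q) : WStep step p δ q := by
  by_cases hδ : δ = Lab.tau
  · subst hδ
    exact Or.inl ⟨rfl, Relation.ReflTransGen.single h⟩
  · exact Or.inr ⟨hδ, p, q, Relation.ReflTransGen.refl, h, Relation.ReflTransGen.refl⟩

theorem WStep.tau_head {p p' q : P} {δ : Lab Δ} (h₁ : step p Lab.tau p')
    (h₂ : WStep step p' δ q) : WStep step p δ q := by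
  rcases h₂ with ⟨hδ, hτ⟩ | ⟨hδ, p₁, q₁, hτ₁, hs, hτ₂⟩
  · exact Or.inl ⟨hδ, Relation.ReflTransGen.head h₁ hτ⟩
  · exact Or.inr ⟨hδ, p₁, q₁, Relation.ReflTransGen.head h₁ hτ₁, hs, hτ₂⟩

theorem WBisim.of_forall_step {p q : P}
    (hp : ∀ δ p', step p δ p' → WStep step q δ p')
    (hq : ∀ δ q', step q δ q' → WStep step p δ q') : WBisim step p q := by
  refine ⟨fun x y => (x = p ∧ y = q) ∨ x = y, ?_, Or.inl ⟨rfl, rfl⟩⟩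
  rintro x y (⟨rfl, rfl⟩ | rfl)
  · exact ⟨fun δ p' h => ⟨p', hp δ p' h, Or.inr rfl⟩,
      fun δ q' h => ⟨q', hq δ q' h, Or.inr rfl⟩⟩
  · exact ⟨fun δ p' h => ⟨p', WStep.of_step h, Or.inr rfl⟩,
      fun δ q' h => ⟨q', WStep.of_step h, Or.inr rfl⟩⟩

theorem WBisim.exists_tauStar_step {p q p' : P} {δ : Lab Δ} (h : WBisim step p q)
    (hs : step p δ p') (hδ : δ ≠ Lab.tau) :
    ∃ q₁ q₂, TauStar step q q₁ ∧ step q₁ δ q₂ := by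
  obtain ⟨R, hR, hpq⟩ := h
  obtain ⟨q', hw, -⟩ := (hR p q hpq).1 δ p' hs
  rcases hw with ⟨hτ, -⟩ | ⟨-, q₁, q₂, hτ, hs', -⟩
  · exact absurd hτ hδ
  · exact ⟨q₁, q₂, hτ, hs'⟩

end WeakBisimulation

namespace FProc

variable {Δ : Type}

def actNil (d : Δ) : FProc Δ := pre (Lab.act d) nil

def aTauB (a b : Δ) : FProc Δ := choice (actNil a) (pre Lab.tau (actNil b))

def abTauB (a b : Δ) : FProc Δ := choice (choice (actNil a) (actNil b)) (pre Lab.tau (actNil b))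

end FProc

namespace FStep

open FProc

variable {Δ : Type} {a b c : Δ}

theorem floor_tau_inv {p x : FProc Δ} (h : FStep a b c (floor p) Lab.tau x) :
    ∃ p', FStep a b c p Lab.tau p' ∧ x = floor p' := by
  cases h with
  | pat h => exact ⟨_, h, rfl⟩

theorem floor_act_inv {p x : FProc Δ} {d : Δ} (h : FStep a b c (floor p) (Lab.act d) x) :
    (∃ q, FStep a b c p (Lab.act a) q) ∧ ∃ w, FStep a b c p (Lab.act b) w := by
  cases h with
  | cur ha hb => exact ⟨⟨_, ha⟩, _, hb⟩

theorem tauStar_floor {p x : FProc Δ} (h : TauStar (FStep a b c) (floor p) x) :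
    ∃ p', TauStar (FStep a b c) p p' ∧ x = floor p' := by
  induction h with
  | refl => exact ⟨p, Relation.ReflTransGen.refl, rfl⟩
  | tail _ hs ih =>
    obtain ⟨p₁, hτ, rfl⟩ := ih
    obtain ⟨p₂, hs', rfl⟩ := floor_tau_inv hs
    exact ⟨p₂, hτ.tail hs', rfl⟩

theorem tauStar_aTauB {x : FProc Δ} (h : TauStar (FStep a b c) (aTauB a b) x) :
    x = aTauB a b ∨ x = actNil b := by
  induction h with
  | refl => exact Or.inl rfl
  | tail _ hs ih =>
    rcases ih with rfl | rfl
    · cases hs with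
      | choiceL hs => cases hs
      | choiceR hs => cases hs; exact Or.inr rfl
    · cases hs

theorem wbisim_abTauB_aTauB : WBisim (FStep a b c) (abTauB a b) (aTauB a b) := by
  apply WBisim.of_forall_step
  · intro δ p' h
    cases h with
    | choiceL h =>
      cases h with
      | choiceL h => cases h; exact WStep.of_step (choiceL (pre _ _))
      | choiceR h => cases h; exact WStep.tau_head (choiceR (pre _ _)) (WStep.of_step (pre _ _))
    | choiceR h => cases h; exact WStep.of_step (choiceR (pre _ _))
  · intro δ q' h
    cases h with
    | choiceL h => cases h; exact WStep.of_step (choiceL (choiceL (pre _ _)))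
    | choiceR h => cases h; exact WStep.of_step (choiceR (pre _ _))

theorem not_wbisim_floor_abTauB_floor_aTauB (hab : a ≠ b) :
    ¬ WBisim (FStep a b c) (floor (abTauB a b)) (floor (aTauB a b)) := by
  intro h
  have hc : FStep a b c (floor (abTauB a b)) (Lab.act c) (floor nil) :=
    cur (choiceL (choiceL (pre _ _))) (choiceL (choiceR (pre _ _)))
  obtain ⟨_, _, hτ, hs⟩ := h.exists_tauStar_step hc nofun
  obtain ⟨p, hp, rfl⟩ := tauStar_floor hτ
  obtain ⟨⟨_, ha⟩, _, hb⟩ := floor_act_inv hs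
  rcases tauStar_aTauB hp with rfl | rfl
  · cases hb with
    | choiceL hb => cases hb; exact hab rfl
    | choiceR hb => cases hb
  · cases ha; exact hab rfl

end FStep

theorem floor_cur_not_congruence_general (Δ : Type) (a b c : Δ)
    (hab : a ≠ b) :
    WBisim (FStep a b c)
      (FProc.choice
        (FProc.choice (FProc.pre (Lab.act a) FProc.nil) (FProc.pre (Lab.act b) FProc.nil))
        (FProc.pre Lab.tau (FProc.pre (Lab.act b) FProc.nil)))
      (FProc.choice (FProc.pre (Lab.act a) FProc.nil)
        (FProc.pre Lab.tau (FProc.pre (Lab.act b) FProc.nil))) ∧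
    ¬ WBisim (FStep a b c)
      (FProc.floor (FProc.choice
        (FProc.choice (FProc.pre (Lab.act a) FProc.nil) (FProc.pre (Lab.act b) FProc.nil))
        (FProc.pre Lab.tau (FProc.pre (Lab.act b) FProc.nil))))
      (FProc.floor (FProc.choice (FProc.pre (Lab.act a) FProc.nil)
        (FProc.pre Lab.tau (FProc.pre (Lab.act b) FProc.nil)))) :=
  ⟨FStep.wbisim_abTauB_aTauB, FStep.not_wbisim_floor_abTauB_floor_aTauB hab⟩

/-- With rules pat and cur (for distinct visible actions `a`, `b`, `c`), weak
bisimilarity fails to be a congruence for `⌊·⌋`: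
`a.0 + b.0 + τ.b.0 ≈ a.0 + τ.b.0` but `⌊a.0 + b.0 + τ.b.0⌋ ≉ ⌊a.0 + τ.b.0⌋`. -/
theorem floor_cur_not_congruence (Δ : Type) (a b c : Δ)
    (hab : a ≠ b) (hac : a ≠ c) (hbc : b ≠ c) :
    WBisim (FStep a b c)
      (FProc.choice
        (FProc.choice (FProc.pre (Lab.act a) FProc.nil) (FProc.pre (Lab.act b) FProc.nil))
        (FProc.pre Lab.tau (FProc.pre (Lab.act b) FProc.nil)))
      (FProc.choice (FProc.pre (Lab.act a) FProc.nil)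
        (FProc.pre Lab.tau (FProc.pre (Lab.act b) FProc.nil))) ∧
    ¬ WBisim (FStep a b c)
      (FProc.floor (FProc.choice
        (FProc.choice (FProc.pre (Lab.act a) FProc.nil) (FProc.pre (Lab.act b) FProc.nil))
        (FProc.pre Lab.tau (FProc.pre (Lab.act b) FProc.nil))))
      (FProc.floor (FProc.choice (FProc.pre (Lab.act a) FProc.nil)
        (FProc.pre Lab.tau (FProc.pre (Lab.act b) FProc.nil)))) :=
  floor_cur_not_congruence_general Δ a b c hab
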